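/- arXiv:2303.04435 — 2 statements merged into one kernel-verified Lean document; each statement's English description precedes it below -/
import Mathlib

section
/- Let Ā be an N×N real symmetric matrix, let e₁ ∈ ℝ^N be a unit vector with Āe₁ = e₁, and suppose that for every v ∈ ℝ^N orthogonal to e₁ one has −‖v‖² ≤ ⟨Āv, v⟩ ≤ (1−λ_G)‖v‖², where λ_G ∈ [0,2] (the algebraic connectivity). Let 0 ≤ α ≤ 1/4, let Q = (1−2α)I + 2αĀ, and let M = {e₁yᵀ : y ∈ ℝ^m} ⊆ ℝ^{N×m}. Then for every F ∈ ℝ^{N×m}, the distance d_M(X) := inf{‖X − Y‖_F : Y ∈ M} satisfies d_M(QF) ≤ |1 − 2αλ_G| · d_M(F). -/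
open scoped RealInnerProductSpace
open Finset Matrix

/-- A feature matrix `F ∈ ℝ^{N×m}` viewed as a point of the Euclidean (Frobenius)
norm space `ℝ^{N×m}`. -/
abbrev FeatureSpace (N m : ℕ) := EuclideanSpace ℝ (Fin N × Fin m)

/-- Left multiplication of a feature matrix by an `N×N` matrix, i.e. `F ↦ QF`. -/
noncomputable def matAct {N m : ℕ} (Q : Matrix (Fin N) (Fin N) ℝ)
    (F : FeatureSpace N m) : FeatureSpace N m :=
  WithLp.toLp 2 fun p => ∑ j, Q p.1 j * F (j, p.2)

/-- Multiplication of a vector by an `N×N` matrix, i.e. `v ↦ Qv`. -/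
noncomputable def matVec {N : ℕ} (Q : Matrix (Fin N) (Fin N) ℝ)
    (v : EuclideanSpace ℝ (Fin N)) : EuclideanSpace ℝ (Fin N) :=
  WithLp.toLp 2 fun i => ∑ j, Q i j * v j

namespace AlignAux

lemma inner_eq_sum {ι : Type*} [Fintype ι] (u v : EuclideanSpace ℝ ι) :
    ⟪u, v⟫ = ∑ i, u i * v i := by
  simp [PiLp.inner_apply, RCLike.inner_apply, mul_comm]

noncomputable def col {N m : ℕ} (G : FeatureSpace N m) (j : Fin m) :
    EuclideanSpace ℝ (Fin N) := WithLp.toLp 2 fun i => G (i, j)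

lemma inner_feature {N m : ℕ} (G H : FeatureSpace N m) :
    ⟪G, H⟫ = ∑ j, ⟪col G j, col H j⟫ := by
  simp only [inner_eq_sum, col, PiLp.toLp_apply]
  rw [Fintype.sum_prod_type]
  exact Finset.sum_comm

lemma norm_sq_feature {N m : ℕ} (G : FeatureSpace N m) :
    ‖G‖ ^ 2 = ∑ j, ‖col G j‖ ^ 2 := by
  rw [← real_inner_self_eq_norm_sq, inner_feature]
  exact Finset.sum_congr rfl fun j _ => real_inner_self_eq_norm_sq _

lemma matVec_adj {N : ℕ} {A : Matrix (Fin N) (Fin N) ℝ} (h : A.IsSymm)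
    (u v : EuclideanSpace ℝ (Fin N)) : ⟪matVec A u, v⟫ = ⟪u, matVec A v⟫ := by
  simp only [inner_eq_sum, matVec, PiLp.toLp_apply, Finset.sum_mul, Finset.mul_sum]
  rw [Finset.sum_comm]
  apply Finset.sum_congr rfl; intro i _
  apply Finset.sum_congr rfl; intro j _
  rw [← h.apply i j]
  ring

lemma matVec_add {N : ℕ} (A : Matrix (Fin N) (Fin N) ℝ)
    (u v : EuclideanSpace ℝ (Fin N)) :
    matVec A (u + v) = matVec A u + matVec A v := by
  ext i
  simp [matVec, mul_add, Finset.sum_add_distrib]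

lemma matVec_smul {N : ℕ} (A : Matrix (Fin N) (Fin N) ℝ) (t : ℝ)
    (v : EuclideanSpace ℝ (Fin N)) :
    matVec A (t • v) = t • matVec A v := by
  ext i
  simp [matVec, Finset.mul_sum]
  apply Finset.sum_congr rfl; intro j _; ring

lemma matAct_add {N m : ℕ} (Q : Matrix (Fin N) (Fin N) ℝ)
    (G G' : FeatureSpace N m) :
    matAct Q (G + G') = matAct Q G + matAct Q G' := by
  ext p
  simp [matAct, mul_add, Finset.sum_add_distrib]

lemma col_matAct {N m : ℕ} (Q : Matrix (Fin N) (Fin N) ℝ) (G : FeatureSpace N m)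
    (j : Fin m) : col (matAct Q G) j = matVec Q (col G j) := by
  ext i; rfl

lemma norm_matVec_le {N : ℕ} (Q : Matrix (Fin N) (Fin N) ℝ) (hQsym : Q.IsSymm)
    (e₁ : EuclideanSpace ℝ (Fin N)) (hQe : matVec Q e₁ = e₁)
    (c : ℝ) (hc : 0 ≤ c)
    (hlow : ∀ v : EuclideanSpace ℝ (Fin N), ⟪v, e₁⟫ = 0 → 0 ≤ ⟪matVec Q v, v⟫)
    (hup : ∀ v : EuclideanSpace ℝ (Fin N), ⟪v, e₁⟫ = 0 → ⟪matVec Q v, v⟫ ≤ c * ‖v‖ ^ 2)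
    (v : EuclideanSpace ℝ (Fin N)) (hv : ⟪v, e₁⟫ = 0) :
    ‖matVec Q v‖ ≤ c * ‖v‖ := by
  have cs : ∀ x y : EuclideanSpace ℝ (Fin N), ⟪x, e₁⟫ = 0 → ⟪y, e₁⟫ = 0 →
      ⟪matVec Q x, y⟫ ^ 2 ≤ ⟪matVec Q x, x⟫ * ⟪matVec Q y, y⟫ := by
    intro x y hx hy
    have key : ∀ t : ℝ, 0 ≤ ⟪matVec Q y, y⟫ * (t * t) + (2 * ⟪matVec Q x, y⟫) * t
        + ⟪matVec Q x, x⟫ := by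
      intro t
      have horth : ⟪x + t • y, e₁⟫ = 0 := by
        rw [inner_add_left, real_inner_smul_left, hx, hy]; ring
      have h0 := hlow (x + t • y) horth
      rw [matVec_add, matVec_smul] at h0
      simp only [inner_add_left, inner_add_right, real_inner_smul_left,
        real_inner_smul_right] at h0
      have hyx : ⟪matVec Q y, x⟫ = ⟪matVec Q x, y⟫ := by
        rw [matVec_adj hQsym, real_inner_comm]
      have hrw : ⟪matVec Q y, y⟫ * (t * t) + (2 * ⟪matVec Q x, y⟫) * t + ⟪matVec Q x, x⟫
          = ⟪matVec Q x, x⟫ + t * ⟪matVec Q y, x⟫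
            + (t * ⟪matVec Q x, y⟫ + t * (t * ⟪matVec Q y, y⟫)) := by
        rw [hyx]; ring
      rw [hrw]; exact h0
    have hd := discrim_le_zero key
    rw [discrim] at hd
    nlinarith [hd]
  have hw : ⟪matVec Q v, e₁⟫ = 0 := by
    rw [matVec_adj hQsym, hQe, hv]
  set w := matVec Q v with hwdef
  have h1 : ⟪matVec Q v, w⟫ = ‖w‖ ^ 2 := by
    rw [hwdef, real_inner_self_eq_norm_sq]
  have h2 := cs v w hv hw
  rw [h1] at h2
  have h3 := hup v hv
  have h4 := hup w hw
  have h5 := hlow v hv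
  have h6 := hlow w hw
  rcases eq_or_lt_of_le (norm_nonneg w) with h0 | h0
  · rw [← h0]; positivity
  · have h7 : ⟪matVec Q v, v⟫ * ⟪matVec Q w, w⟫ ≤ (c * ‖v‖ ^ 2) * (c * ‖w‖ ^ 2) :=
      mul_le_mul h3 h4 h6 (by positivity)
    have hb2 : ‖w‖ ^ 2 * ‖w‖ ^ 2 ≤ (c * ‖v‖) ^ 2 * ‖w‖ ^ 2 := by nlinarith [h2, h7]
    have hb : ‖w‖ ^ 2 ≤ (c * ‖v‖) ^ 2 :=
      le_of_mul_le_mul_right hb2 (by positivity)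
    nlinarith [hb, mul_nonneg hc (norm_nonneg v), sq_nonneg (‖w‖ + c * ‖v‖)]

end AlignAux

open AlignAux

set_option maxHeartbeats 1000000 in
/-- **One alignment update contracts the distance to the rank-one subspace `M`.**
If `Ā` is symmetric with unit top eigenvector `e₁` (eigenvalue 1), its quadratic form
on `e₁⊥` lies in `[−‖v‖², (1−λ_G)‖v‖²]`, `λ_G ∈ [0,2]`, `0 ≤ α ≤ 1/4`, and
`Q = (1−2α)I + 2αĀ`, then `d_M(QF) ≤ |1 − 2αλ_G|·d_M(F)` where
`M = {e₁yᵀ : y ∈ ℝ^m}`. -/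
theorem alignment_update_contracts_distance
    (N m : ℕ)
    (Abar : Matrix (Fin N) (Fin N) ℝ) (hsym : Abar.IsSymm)
    (e₁ : EuclideanSpace ℝ (Fin N)) (he₁ : ‖e₁‖ = 1)
    (heig : matVec Abar e₁ = e₁)
    (lamG : ℝ) (hlam : lamG ∈ Set.Icc (0 : ℝ) 2)
    (hquad : ∀ v : EuclideanSpace ℝ (Fin N), ⟪v, e₁⟫ = 0 →
      -‖v‖ ^ 2 ≤ ⟪matVec Abar v, v⟫ ∧ ⟪matVec Abar v, v⟫ ≤ (1 - lamG) * ‖v‖ ^ 2)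
    (α : ℝ) (hα₀ : 0 ≤ α) (hα₁ : α ≤ 1 / 4)
    (Q : Matrix (Fin N) (Fin N) ℝ)
    (hQ : Q = (1 - 2 * α) • (1 : Matrix (Fin N) (Fin N) ℝ) + (2 * α) • Abar)
    (M : Set (FeatureSpace N m))
    (hM : M = {G : FeatureSpace N m | ∃ y : Fin m → ℝ, ∀ p, G p = e₁ p.1 * y p.2})
    (F : FeatureSpace N m) :
    Metric.infDist (matAct Q F) M ≤ |1 - 2 * α * lamG| * Metric.infDist F M := by
  obtain ⟨hlam0, hlam2⟩ := hlam
  set c : ℝ := 1 - 2 * α * lamG with hcdef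
  have hc : 0 ≤ c := by nlinarith
  have habs : |1 - 2 * α * lamG| = c := abs_of_nonneg hc
  have hQsym : Q.IsSymm := by
    have : Qᵀ = Q := by
      rw [hQ, Matrix.transpose_add, Matrix.transpose_smul, Matrix.transpose_smul,
        Matrix.transpose_one, hsym.eq]
    exact this
  have hmatQ : ∀ v : EuclideanSpace ℝ (Fin N),
      matVec Q v = (1 - 2 * α) • v + (2 * α) • matVec Abar v := by
    intro v
    ext i
    have h1 : ∑ j, (1 : Matrix (Fin N) (Fin N) ℝ) i j * v j = v i := by
      simp [Matrix.one_apply, ite_mul]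
    have h2 : matVec Q v i = (1 - 2 * α) * (∑ j, (1 : Matrix (Fin N) (Fin N) ℝ) i j * v j)
        + (2 * α) * ∑ j, Abar i j * v j := by
      simp only [matVec, PiLp.toLp_apply, hQ, Matrix.add_apply, Matrix.smul_apply, smul_eq_mul,
        Finset.mul_sum, ← Finset.sum_add_distrib]
      exact Finset.sum_congr rfl fun j _ => by ring
    rw [h2, h1]
    simp only [PiLp.add_apply, PiLp.smul_apply, smul_eq_mul, matVec, PiLp.toLp_apply]
  have hQe : matVec Q e₁ = e₁ := by
    have h1 : (1 - 2 * α) + 2 * α = 1 := by ring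
    rw [hmatQ, heig, ← add_smul, h1, one_smul]
  have hlow : ∀ v : EuclideanSpace ℝ (Fin N), ⟪v, e₁⟫ = 0 → 0 ≤ ⟪matVec Q v, v⟫ := by
    intro v hv
    obtain ⟨hl, _⟩ := hquad v hv
    rw [hmatQ, inner_add_left, real_inner_smul_left, real_inner_smul_left,
      real_inner_self_eq_norm_sq]
    nlinarith [sq_nonneg ‖v‖]
  have hup : ∀ v : EuclideanSpace ℝ (Fin N), ⟪v, e₁⟫ = 0 →
      ⟪matVec Q v, v⟫ ≤ c * ‖v‖ ^ 2 := by
    intro v hv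
    obtain ⟨_, hu⟩ := hquad v hv
    rw [hmatQ, inner_add_left, real_inner_smul_left, real_inner_smul_left,
      real_inner_self_eq_norm_sq]
    nlinarith
  have hcontr : ∀ v : EuclideanSpace ℝ (Fin N), ⟪v, e₁⟫ = 0 →
      ‖matVec Q v‖ ≤ c * ‖v‖ :=
    norm_matVec_le Q hQsym e₁ hQe c hc hlow hup
  have hact : ∀ G : FeatureSpace N m, (∀ j, ⟪col G j, e₁⟫ = 0) →
      ‖matAct Q G‖ ≤ c * ‖G‖ := by
    intro G hG
    have hsq : ‖matAct Q G‖ ^ 2 ≤ (c * ‖G‖) ^ 2 := by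
      rw [norm_sq_feature]
      have : ∀ j ∈ Finset.univ, ‖col (matAct Q G) j‖ ^ 2 ≤ c ^ 2 * ‖col G j‖ ^ 2 := by
        intro j _
        rw [col_matAct]
        have := hcontr (col G j) (hG j)
        nlinarith [norm_nonneg (matVec Q (col G j)), mul_nonneg hc (norm_nonneg (col G j))]
      calc ∑ j, ‖col (matAct Q G) j‖ ^ 2 ≤ ∑ j, c ^ 2 * ‖col G j‖ ^ 2 :=
            Finset.sum_le_sum this
        _ = c ^ 2 * ‖G‖ ^ 2 := by rw [← Finset.mul_sum, ← norm_sq_feature]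
        _ = (c * ‖G‖) ^ 2 := by ring
    nlinarith [norm_nonneg (matAct Q G), mul_nonneg hc (norm_nonneg G),
      sq_nonneg (‖matAct Q G‖ + c * ‖G‖)]
  have hne : M.Nonempty := by
    refine ⟨0, ?_⟩
    rw [hM]
    exact ⟨0, fun p => by simp⟩
  have key : ∀ Y ∈ M, Metric.infDist (matAct Q F) M ≤ c * dist F Y := by
    intro Y hY
    rw [hM] at hY
    obtain ⟨yv, hyv⟩ := hY
    set H : FeatureSpace N m := F - Y with hHdef
    set z : Fin m → ℝ := fun j => ⟪col H j, e₁⟫ with hzdef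
    set P : FeatureSpace N m := WithLp.toLp 2 fun p => e₁ p.1 * z p.2 with hPdef
    set R : FeatureSpace N m := H - P with hRdef
    have hcolP : ∀ j, col P j = z j • e₁ := by
      intro j; ext i
      simp only [AlignAux.col, hPdef, PiLp.toLp_apply, PiLp.smul_apply, smul_eq_mul]
      ring
    have hcolR : ∀ j, ⟪col R j, e₁⟫ = 0 := by
      intro j
      have hcR : col R j = col H j - z j • e₁ := by
        ext i
        simp only [AlignAux.col, PiLp.toLp_apply, hRdef, PiLp.sub_apply, PiLp.smul_apply, smul_eq_mul, hPdef]
        ring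
      rw [hcR, inner_sub_left, real_inner_smul_left, real_inner_self_eq_norm_sq, he₁]
      simp [hzdef]
    have hinnerRP : ⟪R, P⟫ = 0 := by
      rw [inner_feature]
      apply Finset.sum_eq_zero
      intro j _
      rw [hcolP, real_inner_smul_right, hcolR, mul_zero]
    have hHRP : H = R + P := by rw [hRdef]; abel
    have hHsq : ‖H‖ ^ 2 = ‖R‖ ^ 2 + ‖P‖ ^ 2 := by
      have h' : ⟪H, H⟫ = ⟪R, R⟫ + ⟪P, P⟫ := by
        have hPR : ⟪P, R⟫ = 0 := by rw [real_inner_comm]; exact hinnerRP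
        rw [hHRP, inner_add_left, inner_add_right, inner_add_right, hinnerRP, hPR]
        ring
      rw [← real_inner_self_eq_norm_sq, ← real_inner_self_eq_norm_sq,
        ← real_inner_self_eq_norm_sq, h']
    have hRH : ‖R‖ ≤ ‖H‖ := by
      nlinarith [norm_nonneg H, norm_nonneg R, sq_nonneg ‖P‖]
    have hF : F = (Y + P) + R := by
      rw [hRdef, hHdef]; abel
    have hsplit : matAct Q F = matAct Q (Y + P) + matAct Q R := by
      rw [hF]
      exact matAct_add Q (Y + P) R
    have hmem : matAct Q (Y + P) ∈ M := by
      rw [hM]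
      refine ⟨fun j => yv j + z j, fun p => ?_⟩
      have hYP : ∀ q : Fin N × Fin m, (Y + P) q = e₁ q.1 * (yv q.2 + z q.2) := by
        intro q
        simp only [PiLp.add_apply, hyv q, hPdef, PiLp.toLp_apply]
        ring
      have hQv : (∑ j, Q p.1 j * e₁ j) = e₁ p.1 := by
          have := congrArg (fun w : EuclideanSpace ℝ (Fin N) => w p.1) hQe; exact this
      calc matAct Q (Y + P) p = ∑ j, Q p.1 j * (e₁ j * (yv p.2 + z p.2)) := by
            simp only [matAct, PiLp.toLp_apply]
            exact Finset.sum_congr rfl fun j _ => by rw [hYP (j, p.2)]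
        _ = (∑ j, Q p.1 j * e₁ j) * (yv p.2 + z p.2) := by
            rw [Finset.sum_mul]
            exact Finset.sum_congr rfl fun j _ => by ring
        _ = e₁ p.1 * (yv p.2 + z p.2) := by rw [hQv]
    calc Metric.infDist (matAct Q F) M ≤ dist (matAct Q F) (matAct Q (Y + P)) :=
          Metric.infDist_le_dist_of_mem hmem
      _ = ‖matAct Q R‖ := by rw [dist_eq_norm, hsplit]; simp [add_sub_cancel_left]
      _ ≤ c * ‖R‖ := hact R hcolR
      _ ≤ c * ‖H‖ := mul_le_mul_of_nonneg_left hRH hc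
      _ = c * dist F Y := by rw [dist_eq_norm]
  rw [habs]
  refine le_of_forall_pos_le_add fun ε hε => ?_
  have hlt : Metric.infDist F M < Metric.infDist F M + ε / (c + 1) := by
    have : 0 < ε / (c + 1) := by positivity
    linarith
  obtain ⟨Y, hYM, hdY⟩ := (Metric.infDist_lt_iff hne).mp hlt
  have h1 : Metric.infDist (matAct Q F) M ≤ c * dist F Y := key Y hYM
  have h2 : c * dist F Y ≤ c * (Metric.infDist F M + ε / (c + 1)) :=
    mul_le_mul_of_nonneg_left hdY.le hc
  have h3 : c * (ε / (c + 1)) ≤ ε := by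
    rw [mul_div_assoc']
    rw [div_le_iff₀ (by linarith)]
    nlinarith
  nlinarith
end

section
/- Let f = (f_1, …, f_N) with each f_i ∈ ℝ^m, and define the uniformity loss U(f) = (1/N) Σ_i log((1/N) Σ_j exp(f_iᵀf_j)) − (1/N) Σ_i ‖f_i‖². Then U is differentiable and its gradient with respect to f_k equals (1/N)·(Σ_j p_{kj} f_j + Σ_i p_{ik} f_i − 2 f_k), where p_{ij} = exp(f_iᵀf_j)/Σ_l exp(f_iᵀf_l). In particular, a gradient-descent step with step size α gives f_k − α∇_{f_k}U = f_k + (2α/N) f_k − (α/N)(Σ_j p_{kj} f_j + Σ_i p_{ik} f_i), a reversed message passing on the affinity graph with row-stochastic matrix (p_{ij}). -/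
open Finset

/-- Dot product `f_iᵀ f_j` of the `i`-th and `j`-th feature rows. -/
noncomputable def rowDot {N m : ℕ} (F : FeatureSpace N m) (i j : Fin N) : ℝ :=
  ∑ c, F (i, c) * F (j, c)

/-- The softmax affinity weights `p_{ij} = exp(f_iᵀf_j) / Σ_l exp(f_iᵀf_l)`. -/
noncomputable def affinity {N m : ℕ} (F : FeatureSpace N m) (i j : Fin N) : ℝ :=
  Real.exp (rowDot F i j) / ∑ l, Real.exp (rowDot F i l)

/-- The uniformity loss
`U(f) = (1/N) Σ_i log((1/N) Σ_j exp(f_iᵀf_j)) − (1/N) Σ_i ‖f_i‖²`. -/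
noncomputable def uniformityLoss {N m : ℕ} (F : FeatureSpace N m) : ℝ :=
  (1 / N) * ∑ i, Real.log ((1 / N) * ∑ j, Real.exp (rowDot F i j))
    - (1 / N) * ∑ i, ∑ c, F (i, c) ^ 2

section Aux
variable {N m : ℕ}

/-- Coordinate projection as a continuous linear map. -/
noncomputable def prj (N m : ℕ) (p : Fin N × Fin m) :
    FeatureSpace N m →L[ℝ] ℝ := EuclideanSpace.proj p

/-- The derivative of `rowDot · i j` at `F`. -/
noncomputable def LL (F : FeatureSpace N m) (i j : Fin N) : FeatureSpace N m →L[ℝ] ℝ :=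
  ∑ c, (F (i, c) • prj N m (j, c) + F (j, c) • prj N m (i, c))

lemma hasFDerivAt_rowDot (F : FeatureSpace N m) (i j : Fin N) :
    HasFDerivAt (fun X : FeatureSpace N m => rowDot X i j) (LL F i j) F := by
  unfold rowDot LL
  exact HasFDerivAt.fun_sum fun c _ =>
    ((prj N m (i,c)).hasFDerivAt.mul (prj N m (j,c)).hasFDerivAt)

/-- The derivative of the uniformity loss at `F`. -/
noncomputable def DD (N m : ℕ) (F : FeatureSpace N m) : FeatureSpace N m →L[ℝ] ℝ :=
  (1 / N : ℝ) • (∑ i, ((1/N * ∑ l, Real.exp (rowDot F i l))⁻¹) •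
      ((1/N : ℝ) • ∑ j, Real.exp (rowDot F i j) • LL F i j))
    - (1 / N : ℝ) • (∑ i : Fin N, ∑ c : Fin m, (2 * F (i,c) ^ 1) • prj N m (i, c))

lemma hasFDerivAt_U (hN : 0 < N) (F : FeatureSpace N m) :
    HasFDerivAt (uniformityLoss (N := N) (m := m)) (DD N m F) F := by
  have hNne : (N : ℝ) ≠ 0 := Nat.cast_ne_zero.2 hN.ne'
  have h1 : ∀ i : Fin N, HasFDerivAt
      (fun X : FeatureSpace N m => Real.log ((1 / N) * ∑ j, Real.exp (rowDot X i j)))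
      (((1/N * ∑ l, Real.exp (rowDot F i l))⁻¹) •
        ((1/N : ℝ) • ∑ j, Real.exp (rowDot F i j) • LL F i j)) F := by
    intro i
    have hs : HasFDerivAt (fun X : FeatureSpace N m => (1/N : ℝ) * ∑ j, Real.exp (rowDot X i j))
        ((1/N : ℝ) • ∑ j, Real.exp (rowDot F i j) • LL F i j) F :=
      (HasFDerivAt.fun_sum fun j _ => (hasFDerivAt_rowDot F i j).exp).const_mul _
    apply hs.log
    have hNpos : (0:ℝ) < N := by exact_mod_cast hN
    have : (0:ℝ) < ∑ j, Real.exp (rowDot F i j) :=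
      Finset.sum_pos (fun j _ => Real.exp_pos _) ⟨⟨0, hN⟩, Finset.mem_univ _⟩
    positivity
  have h2 : HasFDerivAt
      (fun X : FeatureSpace N m => (1/N : ℝ) * ∑ i, ∑ c, X (i, c) ^ 2)
      ((1 / N : ℝ) • (∑ i : Fin N, ∑ c : Fin m, (2 * F (i,c) ^ 1) • prj N m (i, c))) F := by
    refine HasFDerivAt.const_mul ?_ _
    refine HasFDerivAt.fun_sum fun i _ => HasFDerivAt.fun_sum fun c _ => ?_
    simpa [pow_two, pow_one, two_mul, add_smul] using
      (show HasFDerivAt (fun X : FeatureSpace N m => X (i,c) * X (i,c))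
        (F (i,c) • prj N m (i,c) + F (i,c) • prj N m (i,c)) F from
      ((prj N m (i,c)).hasFDerivAt.mul (prj N m (i,c)).hasFDerivAt))
  exact ((HasFDerivAt.fun_sum fun i _ => h1 i).const_mul _).sub h2

lemma key (F v : FeatureSpace N m) :
    ∑ i, (∑ l, Real.exp (rowDot F i l))⁻¹ *
        ∑ j, Real.exp (rowDot F i j) * ∑ c, (F (i,c) * v (j,c) + F (j,c) * v (i,c))
    = ∑ k, ∑ c, (∑ j, affinity F k j * F (j,c) + ∑ i, affinity F i k * F (i,c)) * v (k,c) := by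
  simp only [affinity, div_eq_mul_inv, mul_sum, sum_mul, mul_add, add_mul, sum_add_distrib]
  have e1 : ∑ x : Fin N, ∑ y : Fin N, ∑ c : Fin m,
        (∑ l, Real.exp (rowDot F x l))⁻¹ * (Real.exp (rowDot F x y) * (F (x, c) * v (y, c)))
      = ∑ x : Fin N, ∑ c : Fin m, ∑ i : Fin N,
        Real.exp (rowDot F i x) * (∑ l, Real.exp (rowDot F i l))⁻¹ * F (i, c) * v (x, c) := by
    rw [Finset.sum_comm]
    refine Finset.sum_congr rfl fun b _ => ?_
    rw [Finset.sum_comm]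
    exact Finset.sum_congr rfl fun c _ => Finset.sum_congr rfl fun a _ => by ring
  have e2 : ∑ x : Fin N, ∑ y : Fin N, ∑ c : Fin m,
        (∑ l, Real.exp (rowDot F x l))⁻¹ * (Real.exp (rowDot F x y) * (F (y, c) * v (x, c)))
      = ∑ x : Fin N, ∑ c : Fin m, ∑ i : Fin N,
        Real.exp (rowDot F x i) * (∑ l, Real.exp (rowDot F x l))⁻¹ * F (i, c) * v (x, c) := by
    refine Finset.sum_congr rfl fun x _ => ?_
    rw [Finset.sum_comm]
    exact Finset.sum_congr rfl fun c _ => Finset.sum_congr rfl fun j _ => by ring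
  rw [e1, e2, add_comm]

lemma DD_eq (hN : 0 < N) (F G : FeatureSpace N m)
    (hG : ∀ (k : Fin N) (c : Fin m),
      G (k, c) = (1 / N) * (∑ j, affinity F k j * F (j, c)
        + ∑ i, affinity F i k * F (i, c) - 2 * F (k, c))) :
    (InnerProductSpace.toDual ℝ (FeatureSpace N m)) G = DD N m F := by
  have hNne : (N : ℝ) ≠ 0 := Nat.cast_ne_zero.2 hN.ne'
  ext v
  simp only [InnerProductSpace.toDual_apply_apply, PiLp.inner_apply, RCLike.inner_apply, conj_trivial,
    DD, LL, prj, ContinuousLinearMap.sub_apply, ContinuousLinearMap.smul_apply,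
    ContinuousLinearMap.coe_sum', Finset.sum_apply, ContinuousLinearMap.add_apply,
    smul_eq_mul, Fintype.sum_prod_type, hG, pow_one]
  have hproj : ∀ p, (EuclideanSpace.proj p : FeatureSpace N m →L[ℝ] ℝ) v = v p := fun p => rfl
  simp only [hproj]
  have hsim : ∀ x : Fin N,
      (1/(N:ℝ) * ∑ l, Real.exp (rowDot F x l))⁻¹ *
        (1/(N:ℝ) * ∑ j, Real.exp (rowDot F x j) *
          ∑ c, (F (x, c) * v (j, c) + F (j, c) * v (x, c)))
      = (∑ l, Real.exp (rowDot F x l))⁻¹ *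
          ∑ j, Real.exp (rowDot F x j) *
            ∑ c, (F (x, c) * v (j, c) + F (j, c) * v (x, c)) := by
    intro x
    have hs : (∑ l, Real.exp (rowDot F x l)) ≠ 0 :=
      (Finset.sum_pos (fun j _ => Real.exp_pos _) ⟨⟨0, hN⟩, Finset.mem_univ _⟩).ne'
    rw [mul_inv]
    field_simp
  rw [Finset.sum_congr rfl fun x _ => hsim x, key]
  simp only [mul_sum, ← Finset.sum_sub_distrib]
  exact Finset.sum_congr rfl fun k _ => Finset.sum_congr rfl fun c _ => by ring

end Aux

/-- **The uniformity update is a reversed message passing on the affinity graph.**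
The uniformity loss is differentiable with gradient at row `k` equal to
`(1/N)(Σ_j p_{kj} f_j + Σ_i p_{ik} f_i − 2 f_k)`; in particular the gradient-descent
step with step size `α` is
`f_k − α∇_{f_k}U = f_k + (2α/N) f_k − (α/N)(Σ_j p_{kj} f_j + Σ_i p_{ik} f_i)`. -/
theorem uniformity_update_is_message_passing
    (N m : ℕ) (hN : 0 < N)
    (F : FeatureSpace N m)
    (G : FeatureSpace N m)
    (hG : ∀ (k : Fin N) (c : Fin m),
      G (k, c) = (1 / N) * (∑ j, affinity F k j * F (j, c)
        + ∑ i, affinity F i k * F (i, c) - 2 * F (k, c))) :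
    HasGradientAt (uniformityLoss (N := N) (m := m)) G F
    ∧ ∀ (α : ℝ) (k : Fin N) (c : Fin m),
        F (k, c) - α * G (k, c)
          = F (k, c) + (2 * α / N) * F (k, c)
            - (α / N) * (∑ j, affinity F k j * F (j, c)
              + ∑ i, affinity F i k * F (i, c)) := by
  constructor
  · rw [hasGradientAt_iff_hasFDerivAt, DD_eq hN F G hG]
    exact hasFDerivAt_U hN F
  · intro α k c
    rw [hG k c]
    have hNne : (N : ℝ) ≠ 0 := Nat.cast_ne_zero.2 hN.ne'
    field_simp
    ring
end
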